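/- arXiv:1702.05345 — 3 statements merged into one kernel-verified Lean document; each statement's English description precedes it below -/
import Mathlib

section
/- Assume d is odd and let A be a circular convolution operator on ℓ²(ℤ_d×ℤ_d) with kernel a possessing ℓ^∞ symmetry in frequency response. Let Ω = ({0,1} × ℤ_d) ∪ (ℤ_d × {0,1}) and l_{(i,j)} = (d−1)/2 for each (i,j) ∈ Ω. Then Y = {e_{(i,j)}, A e_{(i,j)}, …, A^{(d−1)/2} e_{(i,j)} : (i,j) ∈ Ω} is a frame for ℓ²(ℤ_d×ℤ_d). -/
open Matrix

/-- Unnormalized 2D discrete Fourier transform of `a : ℤ_d × ℤ_d → ℂ`. -/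
noncomputable def hatKer2 (d : ℕ) [NeZero d] (a : ZMod d × ZMod d → ℂ) :
    ZMod d × ZMod d → ℂ :=
  fun j => ∑ k : ZMod d × ZMod d,
    a k * Complex.exp (-(2 * (Real.pi : ℂ) * Complex.I) *
      ((j.1.val : ℂ) * (k.1.val : ℂ) + (j.2.val : ℂ) * (k.2.val : ℂ)) / (d : ℂ))

/-- The 2D circular convolution operator with kernel `a`, as a matrix. -/
def convMat2 (d : ℕ) (a : ZMod d × ZMod d → ℂ) :
    Matrix (ZMod d × ZMod d) (ZMod d × ZMod d) ℂ :=
  Matrix.of fun k i => a (k - i)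

/-- The Kronecker product `F_d ⊗ F_d`: its entry at `((i₁,i₂),(j₁,j₂))` is
`(1/d) ω_d^{i₁j₁ + i₂j₂}`. -/
noncomputable def F2Mat (d : ℕ) : Matrix (ZMod d × ZMod d) (ZMod d × ZMod d) ℂ :=
  Matrix.of fun i j => ((d : ℂ))⁻¹ * Complex.exp (-(2 * (Real.pi : ℂ) * Complex.I) *
    ((i.1.val : ℂ) * (j.1.val : ℂ) + (i.2.val : ℂ) * (j.2.val : ℂ)) / (d : ℂ))

/-- For odd `d`, the absolute value of the representative of `x : ℤ_d` in
`{-(d-1)/2, …, (d-1)/2}`. -/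
def zAbs (d : ℕ) [NeZero d] (x : ZMod d) : ℕ := min x.val (d - x.val)

/-!
A linear functional killing every `A^n e_q` is a vector `u` with `(u ᵥ* A^n) q = 0`. The
Fourier transform turns `A` into multiplication by `â`, so with `ψ = û` these conditions read
`∑_ξ â(ξ)^n ψ(ξ) χ_q(ξ) = 0` for `n ≤ (d-1)/2`, where `χ_q(ξ) = e^{-2πi ξ·q/d}`. As `â` takes
only `(d+1)/2` values, one on each level set `Λ_l`, a Vandermonde argument gives
`∑_{ξ ∈ Λ_l} ψ(ξ) χ_q(ξ) = 0` for every `l`. Inverting the one-dimensional transform in the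
second variable, the points `q ∈ {0,1} × ℤ_d` show that along each row `p = t` of `Λ_l` both `ψ`
and `e^{-2πis/d} ψ` sum to zero. A row with `|t| < l` meets `Λ_l` in the two points `s = ±l`, at
which `e^{-2πis/d}` takes different values, so `ψ` vanishes there; the points `q ∈ ℤ_d × {0,1}`
give the same on columns, and on the rows `|t| = l` every point other than `s = ±l` is then
already known to vanish. Hence `ψ = 0`, and so `u = 0`.
-/

namespace DynamicalSampling

open Finset

theorem span_eq_top_of_forall_dotProduct_eq_zero {ι K : Type*} [Fintype ι] [DecidableEq ι]
    [Field K] {S : Set (ι → K)} (h : ∀ u : ι → K, (∀ v ∈ S, u ⬝ᵥ v = 0) → u = 0) :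
    Submodule.span K S = ⊤ := by
  by_contra hne
  obtain ⟨f, hf0, hle⟩ := (Submodule.span K S).exists_le_ker_of_lt_top (lt_top_iff_ne_top.2 hne)
  have hf : ∀ v, f v = (fun i => f (Pi.single i 1)) ⬝ᵥ v := fun v => by
    conv_lhs => rw [← univ_sum_single v]
    rw [map_sum, dotProduct]
    refine sum_congr rfl fun i _ => ?_
    rw [mul_comm, ← smul_eq_mul, ← map_smul, ← Pi.single_smul', smul_eq_mul, mul_one]
  have hu := h _ fun v hv => (hf v).symm.trans (hle (Submodule.subset_span hv))
  exact hf0 (LinearMap.ext fun v => by simp [hf v, hu])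

theorem sum_filter_eq_zero_of_forall_sum_pow_mul_eq_zero {ι K : Type*} [Field K] [DecidableEq K]
    {s : Finset ι} {f w : ι → K} {m : ℕ} (hcard : #(s.image f) ≤ m)
    (h : ∀ n < m, ∑ i ∈ s, f i ^ n * w i = 0) (v : K) : ∑ i ∈ s with f i = v, w i = 0 := by
  set V := s.image f
  by_cases hv : v ∈ V
  swap
  · exact sum_eq_zero fun i hi => absurd (mem_filter.1 hi).2 fun hfi =>
      hv (hfi ▸ mem_image_of_mem f (mem_filter.1 hi).1)
  set W : K → K := fun x => ∑ i ∈ s with f i = x, w i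
  have hW : ∀ n < m, ∑ x ∈ V, W x * x ^ n = 0 := fun n hn => by
    rw [← h n hn, ← sum_fiberwise_of_maps_to (g := f) (t := V) fun i hi => mem_image_of_mem f hi]
    refine sum_congr rfl fun x _ => ?_
    rw [sum_mul]
    exact sum_congr rfl fun i hi => by rw [(mem_filter.1 hi).2, mul_comm]
  let e := V.equivFin
  have hzero := Matrix.eq_zero_of_forall_pow_sum_mul_pow_eq_zero
    (f := fun j => (e.symm j : K)) (v := fun j => W (e.symm j))
    (Subtype.val_injective.comp e.symm.injective) fun n => by
      rw [← hW n (n.2.trans_le hcard), ← sum_coe_sort V]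
      exact e.symm.sum_comp fun x : V => W x * (x : K) ^ (n : ℕ)
  simpa using congrFun hzero (e ⟨v, hv⟩)

open ZMod

variable {d : ℕ} [NeZero d]

def pairing (ξ k : ZMod d × ZMod d) : ZMod d := ξ.1 * k.1 + ξ.2 * k.2

noncomputable def fourier2 (w : ZMod d × ZMod d → ℂ) (ξ : ZMod d × ZMod d) : ℂ :=
  ∑ k, w k * stdAddChar (pairing ξ k)

theorem hatKer2_eq_sum_stdAddChar (a : ZMod d × ZMod d → ℂ) (ξ : ZMod d × ZMod d) :
    hatKer2 d a ξ = ∑ k, a k * stdAddChar (-pairing ξ k) := by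
  refine sum_congr rfl fun k _ => ?_
  have hcast : (((-((ξ.1.val * k.1.val + ξ.2.val * k.2.val : ℕ) : ℤ)) : ℤ) : ZMod d)
      = -pairing ξ k := by
    simp [pairing]
  rw [← hcast, stdAddChar_coe]
  congr 2
  push_cast
  ring

theorem sum_stdAddChar_pairing (x : ZMod d × ZMod d) :
    ∑ ξ, stdAddChar (pairing ξ x) = if x = 0 then (d : ℂ) ^ 2 else 0 := by
  simp only [pairing, AddChar.map_add_eq_mul, Fintype.sum_prod_type, ← sum_mul_sum,
    AddChar.sum_mulShift _ (isPrimitive_stdAddChar d), ZMod.card, Prod.ext_iff]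
  split_ifs <;> simp_all [sq]

theorem sum_fourier2_mul_stdAddChar (w : ZMod d × ZMod d → ℂ) (q : ZMod d × ZMod d) :
    ∑ ξ, fourier2 w ξ * stdAddChar (-pairing ξ q) = (d : ℂ) ^ 2 * w q := by
  have hsplit : ∀ ξ k, stdAddChar (pairing ξ k) * stdAddChar (-pairing ξ q)
      = stdAddChar (pairing ξ (k - q)) := fun ξ k => by
    rw [← AddChar.map_add_eq_mul]; congr 1; simp only [pairing, Prod.fst_sub, Prod.snd_sub]; ring
  simp only [fourier2, sum_mul, mul_assoc, hsplit]
  rw [sum_comm]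
  simp only [← mul_sum, sum_stdAddChar_pairing, sub_eq_zero, mul_ite, mul_zero, sum_ite_eq',
    mem_univ, if_true, mul_comm]

theorem fourier2_vecMul_convMat2 (a w : ZMod d × ZMod d → ℂ) (ξ : ZMod d × ZMod d) :
    fourier2 (w ᵥ* convMat2 d a) ξ = hatKer2 d a ξ * fourier2 w ξ := by
  have hshift : ∀ k, ∑ i, a (k - i) * stdAddChar (pairing ξ i)
      = stdAddChar (pairing ξ k) * hatKer2 d a ξ := fun k => by
    rw [hatKer2_eq_sum_stdAddChar, mul_sum, ← (Equiv.subLeft k).sum_comp]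
    refine sum_congr rfl fun m _ => ?_
    rw [Equiv.subLeft_apply, sub_sub_cancel, mul_left_comm, ← AddChar.map_add_eq_mul]
    congr 2
    simp only [pairing, Prod.fst_sub, Prod.snd_sub]; ring
  simp only [fourier2, vecMul, dotProduct, convMat2, of_apply, sum_mul, mul_assoc]
  rw [sum_comm, mul_sum]
  refine sum_congr rfl fun k _ => ?_
  rw [← mul_sum, hshift]; ring

theorem fourier2_vecMul_convMat2_pow (a w : ZMod d × ZMod d → ℂ) (n : ℕ)
    (ξ : ZMod d × ZMod d) :
    fourier2 (w ᵥ* convMat2 d a ^ n) ξ = hatKer2 d a ξ ^ n * fourier2 w ξ := by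
  induction n with
  | zero => simp
  | succ n ih => rw [pow_succ, ← vecMul_vecMul, fourier2_vecMul_convMat2, ih]; ring

theorem eq_natCast_zAbs_or_eq_neg (s : ZMod d) :
    s = (zAbs d s : ZMod d) ∨ s = -(zAbs d s : ZMod d) := by
  rcases min_choice s.val (d - s.val) with h | h <;> rw [zAbs, h]
  · exact Or.inl (natCast_zmod_val s).symm
  · right
    rw [Nat.cast_sub (val_lt s).le, natCast_self, zero_sub, neg_neg, natCast_zmod_val]

theorem zAbs_natCast {l : ℕ} (hl : l ≤ (d - 1) / 2) : zAbs d (l : ZMod d) = l := by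
  have := NeZero.ne d
  rw [zAbs, val_cast_of_lt (by omega)]
  omega

theorem zAbs_le_of_odd (hodd : Odd d) (s : ZMod d) : zAbs d s ≤ (d - 1) / 2 := by
  obtain ⟨k, rfl⟩ := hodd
  have := val_lt s
  unfold zAbs
  omega

theorem eq_zero_of_forall_sum_zAbs_eq_pow_mul_eq_zero {g : ZMod d → ℂ} {l : ℕ}
    (h : ∀ n < 2, ∑ s with zAbs d s = l, stdAddChar (-s) ^ n * g s = 0) {s₀ : ZMod d}
    (hs₀ : zAbs d s₀ = l) : g s₀ = 0 := by
  have hcard : #({s | zAbs d s = l} : Finset (ZMod d)) ≤ 2 := by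
    refine (card_le_card fun s hs => ?_).trans (card_le_two (a := (l : ZMod d)) (b := -l))
    rw [mem_filter] at hs
    simpa [← hs.2] using eq_natCast_zAbs_or_eq_neg s
  have hfiber := sum_filter_eq_zero_of_forall_sum_pow_mul_eq_zero
    (card_image_le.trans hcard) h (stdAddChar (-s₀))
  rwa [filter_filter, sum_eq_single_of_mem s₀ (by simp [hs₀])] at hfiber
  intro s hs hne
  simp only [injective_stdAddChar.eq_iff, neg_inj, mem_filter, mem_univ, true_and] at hs
  exact absurd hs.2 hne

theorem sum_row_eq_zero_of_forall_sum_mul_stdAddChar_eq_zero {P : ZMod d × ZMod d → Prop}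
    [DecidablePred P] {g : ZMod d × ZMod d → ℂ}
    (h : ∀ j, ∑ ξ with P ξ, g ξ * stdAddChar (-(ξ.2 * j)) = 0)
    (t : ZMod d) : ∑ s with P (s, t), g (s, t) = 0 := by
  set Φ : ZMod d → ℂ := fun t => ∑ s with P (s, t), g (s, t)
  have hΦ : 𝓕 Φ = 0 := funext fun j => by
    rw [dft_apply, Pi.zero_apply, ← h j, sum_filter, Fintype.sum_prod_type_right]
    refine sum_congr rfl fun t _ => ?_
    dsimp only [Φ]
    rw [smul_eq_mul, sum_filter, mul_sum]
    exact sum_congr rfl fun s _ => by split_ifs <;> simp [mul_comm]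
  exact congrFun ((LinearEquiv.map_eq_zero_iff dft).1 hΦ) t

def linfNorm (ξ : ZMod d × ZMod d) : ℕ := max (zAbs d ξ.1) (zAbs d ξ.2)

def LevelOrthogonal (ψ : ZMod d × ZMod d → ℂ) : Prop :=
  ∀ (ξ₀ : ZMod d × ZMod d) (j : ZMod d) (n : ℕ), n < 2 →
    ∑ ξ with linfNorm ξ = linfNorm ξ₀, ψ ξ * stdAddChar (-pairing ξ ((n : ZMod d), j)) = 0

theorem LevelOrthogonal.sum_row_eq_zero {ψ : ZMod d × ZMod d → ℂ} (h : LevelOrthogonal ψ)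
    (s₀ t₀ : ZMod d) {n : ℕ} (hn : n < 2) :
    ∑ s with linfNorm (s, t₀) = linfNorm (s₀, t₀), stdAddChar (-s) ^ n * ψ (s, t₀) = 0 := by
  refine sum_row_eq_zero_of_forall_sum_mul_stdAddChar_eq_zero
    (P := fun ξ => linfNorm ξ = linfNorm (s₀, t₀)) (g := fun ξ => stdAddChar (-ξ.1) ^ n * ψ ξ)
    (fun j => ?_) t₀
  rw [← h (s₀, t₀) j n hn]
  refine sum_congr rfl fun ξ _ => ?_
  rw [pairing, neg_add, AddChar.map_add_eq_mul, ← nsmul_eq_mul', ← smul_neg,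
    AddChar.map_nsmul_eq_pow]
  ring

/-- For `|t| < |s|` the row through `(s, t)` of its level set is `{s' | |s'| = |s|}`; for
`|t| = |s|` it is `{s' | |s'| ≤ |s|}`, whose interior points `hinner` disposes of. -/
theorem LevelOrthogonal.apply_eq_zero {ψ : ZMod d × ZMod d → ℂ} (h : LevelOrthogonal ψ)
    {s t : ZMod d} (hts : zAbs d t ≤ zAbs d s)
    (hinner : zAbs d t = zAbs d s → ∀ s', zAbs d s' < zAbs d s → ψ (s', t) = 0) :
    ψ (s, t) = 0 := by
  refine eq_zero_of_forall_sum_zAbs_eq_pow_mul_eq_zero (g := fun s' => ψ (s', t))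
    (fun n hn => ?_) rfl
  rw [← h.sum_row_eq_zero s t hn]
  refine sum_subset (fun s' hs' => ?_) (fun s' hs' hs'' => ?_)
  · simp only [mem_filter, mem_univ, true_and] at hs' ⊢
    simp only [linfNorm] at hs' ⊢
    omega
  · simp only [mem_filter, mem_univ, true_and] at hs' hs''
    simp only [linfNorm] at hs' hs''
    rw [hinner (by omega) s' (by omega), mul_zero]

theorem eq_zero_of_levelOrthogonal {ψ : ZMod d × ZMod d → ℂ} (h : LevelOrthogonal ψ)
    (hswap : LevelOrthogonal (ψ ∘ Prod.swap)) : ψ = 0 := by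
  have hlt : ∀ s t, zAbs d t < zAbs d s → ψ (s, t) = 0 := fun s t hts =>
    h.apply_eq_zero hts.le fun heq => absurd heq hts.ne
  have hgt : ∀ s t, zAbs d s < zAbs d t → ψ (s, t) = 0 := fun s t hst =>
    hswap.apply_eq_zero (s := t) (t := s) hst.le fun heq => absurd heq hst.ne
  funext ⟨s, t⟩
  rcases le_total (zAbs d t) (zAbs d s) with hts | hst
  · exact h.apply_eq_zero hts fun heq s' hs' => hgt s' t (heq ▸ hs')
  · exact hswap.apply_eq_zero (s := t) (t := s) hst fun heq t' ht' => hlt s t' (heq ▸ ht')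

theorem eq_zero_of_forall_sum_linfNorm_eq_mul_stdAddChar_eq_zero {ψ : ZMod d × ZMod d → ℂ}
    (h : ∀ q : ZMod d × ZMod d, (q.1 = 0 ∨ q.1 = 1 ∨ q.2 = 0 ∨ q.2 = 1) → ∀ ξ₀ : ZMod d × ZMod d,
      ∑ ξ with linfNorm ξ = linfNorm ξ₀, ψ ξ * stdAddChar (-pairing ξ q) = 0) :
    ψ = 0 := by
  refine eq_zero_of_levelOrthogonal (fun ξ₀ j n hn => h _ ?_ ξ₀) (fun ξ₀ j n hn => ?_)
  · interval_cases n <;> simp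
  · rw [← h (j, n) (by interval_cases n <;> simp) ξ₀.swap]
    refine sum_equiv (Equiv.prodComm _ _) (fun ξ => ?_) (by simp [pairing, add_comm])
    simp only [mem_filter, mem_univ, true_and]
    simp [linfNorm, max_comm]

theorem card_image_le_of_linfNorm_eq_imp_eq {K : Type*} [DecidableEq K] (hodd : Odd d)
    {F : ZMod d × ZMod d → K} (hF : ∀ x y, linfNorm x = linfNorm y → F x = F y) :
    #(univ.image F) ≤ (d - 1) / 2 + 1 := by
  refine (card_le_card (t := (range ((d - 1) / 2 + 1)).image fun l : ℕ => F ((l : ZMod d), 0))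
    fun v hv => ?_).trans (card_image_le.trans (card_range _).le)
  obtain ⟨ξ, -, rfl⟩ := mem_image.1 hv
  have hξ : linfNorm ξ ≤ (d - 1) / 2 := max_le (zAbs_le_of_odd hodd _) (zAbs_le_of_odd hodd _)
  refine mem_image.2 ⟨linfNorm ξ, mem_range.2 (Nat.lt_succ_of_le hξ), hF _ _ ?_⟩
  rw [linfNorm, zAbs_natCast hξ]
  simp [zAbs]

end DynamicalSampling

open DynamicalSampling Finset ZMod

/-- assume `d` odd and the kernel `a` possesses `ℓ^∞` symmetry in
frequency response, i.e. the level sets of `â` are exactly the sets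
`Λ_l = {(s,p) : max(|s|,|p|) = l}` (two frequencies carry the same value of `â` iff
they have the same `ℓ^∞` norm). With `Ω = ({0,1} × ℤ_d) ∪ (ℤ_d × {0,1})` and
`l_{(i,j)} = (d-1)/2`, `Y = {A^n e_{(i,j)} : (i,j) ∈ Ω, n ≤ (d-1)/2}` is a frame. -/
theorem stmt16 (d : ℕ) [NeZero d] (hodd : Odd d) (a : ZMod d × ZMod d → ℂ)
    (hsym : ∀ x y : ZMod d × ZMod d, hatKer2 d a x = hatKer2 d a y ↔
      max (zAbs d x.1) (zAbs d x.2) = max (zAbs d y.1) (zAbs d y.2)) :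
    Submodule.span ℂ {v : ZMod d × ZMod d → ℂ | ∃ q : ZMod d × ZMod d,
        (q.1 = 0 ∨ q.1 = 1 ∨ q.2 = 0 ∨ q.2 = 1) ∧ ∃ n ≤ (d - 1) / 2,
        v = (convMat2 d a) ^ n *ᵥ (Pi.single q 1 : ZMod d × ZMod d → ℂ)} = ⊤ := by
  refine span_eq_top_of_forall_dotProduct_eq_zero fun u hu => ?_
  have hmoment : ∀ q : ZMod d × ZMod d, (q.1 = 0 ∨ q.1 = 1 ∨ q.2 = 0 ∨ q.2 = 1) →
      ∀ n < (d - 1) / 2 + 1,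
        ∑ ξ, hatKer2 d a ξ ^ n * (fourier2 u ξ * stdAddChar (-pairing ξ q)) = 0 := by
    intro q hq n hn
    have h0 := hu _ ⟨q, hq, n, Nat.lt_succ_iff.1 hn, rfl⟩
    rw [dotProduct_mulVec, dotProduct_single, mul_one] at h0
    simp_rw [← mul_assoc, ← fourier2_vecMul_convMat2_pow, sum_fourier2_mul_stdAddChar, h0,
      mul_zero]
  have hfourier : fourier2 u = 0 := by
    refine eq_zero_of_forall_sum_linfNorm_eq_mul_stdAddChar_eq_zero fun q hq ξ₀ => ?_
    have hfiber := sum_filter_eq_zero_of_forall_sum_pow_mul_eq_zero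
      (card_image_le_of_linfNorm_eq_imp_eq hodd fun x y => (hsym x y).2) (hmoment q hq)
      (hatKer2 d a ξ₀)
    rwa [filter_congr fun ξ _ => hsym ξ ξ₀] at hfiber
  funext q
  have hinv := sum_fourier2_mul_stdAddChar u q
  simp only [hfourier, Pi.zero_apply, zero_mul, sum_const_zero] at hinv
  simpa [NeZero.ne d] using hinv.symm
end

section
/- Assume d is odd and let A be a circular convolution operator on ℓ²(ℤ_d×ℤ_d) with kernel a possessing quadrantal symmetry in frequency response. Suppose i_1, i_2, j_1, j_2 ∈ ℤ_d satisfy gcd(|i_1−i_2|, d) = 1 and gcd(|j_1−j_2|, d) = 1, let Ω = {(i_1,j_1), (i_2,j_2), (i_1,j_2), (i_2,j_1)}, and let l_{(i,j)} = (d+1)²/4 − 1 for each (i,j) ∈ Ω. Then Y = {e_{(i,j)}, A e_{(i,j)}, …, A^{(d+1)²/4 − 1} e_{(i,j)} : (i,j) ∈ Ω} is a frame for ℓ²(ℤ_d×ℤ_d). -/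
open Matrix

/-!
The characters `χ_k(x) = ω^(k₁x₁ + k₂x₂)` diagonalise every circular convolution, `A χ_k = â(k) χ_k`.
Since `â` is constant on the sign orbits `{±s} × {±p}`, it takes at most `((d + 1) / 2)² = (d + 1)² / 4`
values, so a Lagrange polynomial in `A` of degree `< (d + 1)² / 4` maps `e_q` to its component in the
eigenspace of `â(k₀)`; by quadrantal symmetry that eigenspace is spanned by the `χ_k` with `k` in the
sign orbit of `k₀`. The components of the four `e_q`, `q ∈ Ω`, span it: their coefficient matrix is the
tensor product of two `2 × 2` matrices `(ω^(σ i))`, `σ = ±s`, `i = i₁, i₂`, whose determinant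
`ω^(s(i₁ - i₂)) - ω^(-s(i₁ - i₂))` vanishes only if `2s(i₁ - i₂) = 0`; as `d` is odd and `i₁ - i₂` is a
unit, that means `s = -s = 0`, where a single row suffices. So every `χ_k`, hence all of `ℓ²(ℤ_d × ℤ_d)`, lies in the span of `Y`.
-/

open Finset Polynomial

theorem Nat.add_one_sq_div_four_of_odd {d : ℕ} (hd : Odd d) :
    (d + 1) ^ 2 / 4 = (d / 2 + 1) ^ 2 := by
  obtain ⟨m, rfl⟩ := hd
  rw [show (2 * m + 1) / 2 = m by omega, show (2 * m + 1 + 1) ^ 2 = 4 * (m + 1) ^ 2 by ring,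
    Nat.mul_div_cancel_left _ (by norm_num)]

theorem AddChar.exists_combination_eq_ite_of_injective {R K : Type*} [CommRing R]
    [DecidableEq R] [Field K] (ψ : AddChar R K) (hψ : Function.Injective ψ) (h2 : IsUnit (2 : R)) {i₁ i₂ : R}
    (hi : IsUnit (i₁ - i₂)) (s : R) :
    ∃ α₁ α₂ : K, ∀ σ, σ = s ∨ σ = -s →
      α₁ * ψ (σ * i₁) + α₂ * ψ (σ * i₂) = if σ = s then 1 else 0 := by
  by_cases hs : -s = s
  · refine ⟨(ψ (s * i₁))⁻¹, 0, fun σ hσ => ?_⟩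
    obtain rfl : σ = s := hσ.elim id (· ▸ hs)
    simp [(ψ.val_isUnit _).ne_zero]
  · set D := ψ (s * i₁) * ψ (-s * i₂) - ψ (s * i₂) * ψ (-s * i₁)
    have hD : D ≠ 0 := by
      rw [sub_ne_zero, ← AddChar.map_add_eq_mul, ← AddChar.map_add_eq_mul, Ne, hψ.eq_iff]
      intro h
      have h0 : (2 : R) * (s * (i₁ - i₂)) = 0 := by linear_combination h
      rw [h2.mul_right_eq_zero, hi.mul_left_eq_zero] at h0
      exact hs (by rw [h0, neg_zero])
    refine ⟨ψ (-s * i₂) / D, -ψ (-s * i₁) / D, fun σ hσ => ?_⟩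
    rcases hσ with rfl | rfl
    · rw [if_pos rfl]; field_simp; ring
    · rw [if_neg hs]; field_simp; ring

theorem mulVec_addChar_eq_smul {G R : Type*} [AddCommGroup G] [Fintype G] [CommRing R]
    (a : G → R) (ψ : AddChar G R) :
    (Matrix.of fun x y => a (x - y)) *ᵥ ⇑ψ = (∑ j, a j * ψ (-j)) • ⇑ψ := by
  ext x
  simp only [mulVec, dotProduct, of_apply, Pi.smul_apply, smul_eq_mul, sum_mul]
  exact Fintype.sum_equiv (Equiv.subLeft x) _ _ fun y => by
    rw [Equiv.subLeft_apply, mul_assoc, ← AddChar.map_add_eq_mul, neg_sub, sub_add_cancel]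

theorem Module.End.sum_filter_eigen_mem_span_pow {K V ι : Type*} [Field K] [AddCommGroup V]
    [Module K V] [Fintype ι] [DecidableEq K] (f : Module.End K V) (e : ι → V) (μ : ι → K)
    (he : ∀ i, f (e i) = μ i • e i) (c : ι → K) (i₀ : ι) {N : ℕ} (hN : #(univ.image μ) ≤ N) :
    ∑ i ∈ univ.filter (μ · = μ i₀), c i • e i ∈
      Submodule.span K {w | ∃ n < N, w = (f ^ n) (∑ i, c i • e i)} := by
  have hs : μ i₀ ∈ univ.image μ := mem_image_of_mem μ (mem_univ i₀)
  set P := Lagrange.basis (univ.image μ) id (μ i₀)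
  have hP : ∀ i, P.eval (μ i) = if μ i = μ i₀ then 1 else 0 := by
    intro i
    split_ifs with h
    · rw [h]; exact Lagrange.eval_basis_self (Set.injOn_id _) hs
    · exact Lagrange.eval_basis_of_ne (v := id) (Ne.symm h) (mem_image_of_mem μ (mem_univ i))
  have hPdeg : P.natDegree < N := by
    rw [Lagrange.natDegree_basis (Set.injOn_id _) hs]
    have := card_pos.2 ⟨_, hs⟩
    omega
  have hPf : aeval f P (∑ i, c i • e i) = ∑ i ∈ univ.filter (μ · = μ i₀), c i • e i := by
    simp only [map_sum, map_smul, aeval_apply_of_mem_apply_eq_smul (he _), hP, ite_smul,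
      one_smul, zero_smul, smul_ite, smul_zero, sum_ite, sum_const_zero, add_zero]
  rw [← hPf, aeval_eq_sum_range' hPdeg, LinearMap.sum_apply]
  exact Submodule.sum_mem _ fun n hn =>
    Submodule.smul_mem _ _ (Submodule.subset_span ⟨n, mem_range.1 hn, rfl⟩)

namespace ZMod

variable {d : ℕ} [NeZero d]

theorem card_image_le_of_neg_invariant {X : Type*} [DecidableEq X] (f : ZMod d × ZMod d → X)
    (hf : ∀ x y : ZMod d × ZMod d, (y.1 = x.1 ∨ y.1 = -x.1) → (y.2 = x.2 ∨ y.2 = -x.2) →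
      f x = f y) :
    #(univ.image f) ≤ (d / 2 + 1) ^ 2 := by
  set S : Finset (ZMod d) := (range (d / 2 + 1)).image Nat.cast
  have hrep : ∀ s : ZMod d, ∃ t ∈ S, t = s ∨ t = -s := fun s =>
    ⟨_, mem_image_of_mem _ (mem_range.2 (Nat.lt_succ_of_le s.natAbs_valMinAbs_le)),
      by rw [natCast_natAbs_valMinAbs]; split_ifs <;> simp⟩
  have hS : #S ≤ d / 2 + 1 := card_image_le.trans (card_range _).le
  calc #(univ.image f) ≤ #((S ×ˢ S).image f) := by
        refine card_le_card fun z hz => ?_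
        obtain ⟨x, -, rfl⟩ := mem_image.1 hz
        obtain ⟨t₁, ht₁, h₁⟩ := hrep x.1
        obtain ⟨t₂, ht₂, h₂⟩ := hrep x.2
        exact mem_image.2 ⟨(t₁, t₂), mem_product.2 ⟨ht₁, ht₂⟩, (hf x _ h₁ h₂).symm⟩
    _ ≤ #S * #S := card_image_le.trans (card_product S S).le
    _ ≤ (d / 2 + 1) ^ 2 := by rw [sq]; exact Nat.mul_le_mul hS hS

noncomputable def prodChar (d : ℕ) [NeZero d] (k : ZMod d × ZMod d) :
    AddChar (ZMod d × ZMod d) ℂ :=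
  (stdAddChar.mulShift k.1).compAddMonoidHom (AddMonoidHom.fst _ _) *
    (stdAddChar.mulShift k.2).compAddMonoidHom (AddMonoidHom.snd _ _)

theorem prodChar_apply (k x : ZMod d × ZMod d) :
    prodChar d k x = stdAddChar (k.1 * x.1) * stdAddChar (k.2 * x.2) := rfl

theorem stdAddChar_mul_neg (s t : ZMod d) :
    stdAddChar (s * -t) =
      Complex.exp (-(2 * (Real.pi : ℂ) * Complex.I) * ((s.val : ℂ) * (t.val : ℂ)) / d) := by
  have : s * -t = ((-(s.val * t.val : ℤ) : ℤ) : ZMod d) := by simp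
  rw [this, stdAddChar_coe]
  push_cast
  ring_nf

theorem hatKer2_eq_sum_prodChar (a : ZMod d × ZMod d → ℂ) (k : ZMod d × ZMod d) :
    hatKer2 d a k = ∑ j, a j * prodChar d k (-j) := by
  refine sum_congr rfl fun j _ => congrArg (a j * ·) ?_
  rw [prodChar_apply, Prod.fst_neg, Prod.snd_neg, stdAddChar_mul_neg, stdAddChar_mul_neg,
    ← Complex.exp_add]
  ring_nf

theorem convMat2_mulVec_prodChar (a : ZMod d × ZMod d → ℂ) (k : ZMod d × ZMod d) :
    convMat2 d a *ᵥ ⇑(prodChar d k) = hatKer2 d a k • ⇑(prodChar d k) := by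
  rw [hatKer2_eq_sum_prodChar]
  exact mulVec_addChar_eq_smul a _

theorem single_eq_sum_prodChar (q : ZMod d × ZMod d) :
    (Pi.single q 1 : ZMod d × ZMod d → ℂ) =
      ∑ k, (((d : ℂ) ^ 2)⁻¹ * prodChar d k (-q)) • ⇑(prodChar d k) := by
  ext x
  have hsum (t : ZMod d) : ∑ s : ZMod d, stdAddChar (s * t) = if t = 0 then (d : ℂ) else 0 := by
    simpa using AddChar.sum_mulShift t (isPrimitive_stdAddChar d)
  have hd : (d : ℂ) ≠ 0 := Nat.cast_ne_zero.2 (NeZero.ne d)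
  calc (Pi.single q 1 : ZMod d × ZMod d → ℂ) x
      = ((d : ℂ) ^ 2)⁻¹ * ((∑ s : ZMod d, stdAddChar (s * (x.1 - q.1))) *
          ∑ t : ZMod d, stdAddChar (t * (x.2 - q.2))) := by
        rw [hsum, hsum]
        by_cases h₁ : x.1 = q.1 <;> by_cases h₂ : x.2 = q.2 <;>
          simp [Pi.single_apply, Prod.ext_iff, sub_eq_zero, h₁, h₂, ← sq, hd]
    _ = _ := by
        rw [sum_mul_sum, Finset.sum_apply, Fintype.sum_prod_type]
        simp only [mul_sum]
        refine sum_congr rfl fun s _ => sum_congr rfl fun t _ => ?_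
        simp only [Pi.smul_apply, smul_eq_mul, prodChar_apply, sub_eq_add_neg, mul_add,
          AddChar.map_add_eq_mul, Prod.fst_neg, Prod.snd_neg]
        ring

theorem span_range_prodChar (d : ℕ) [NeZero d] : Submodule.span ℂ (Set.range fun k => ⇑(prodChar d k)) = ⊤ := by
  refine eq_top_iff.2 ((Pi.basisFun ℂ _).span_eq.symm.le.trans (Submodule.span_le.2 ?_))
  rintro _ ⟨q, rfl⟩
  rw [Pi.basisFun_apply, single_eq_sum_prodChar]
  exact Submodule.sum_mem _ fun k _ => Submodule.smul_mem _ _ (Submodule.subset_span ⟨k, rfl⟩)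

def signOrbit (d : ℕ) [NeZero d] (k : ZMod d × ZMod d) : Finset (ZMod d × ZMod d) :=
  univ.filter fun x => (x.1 = k.1 ∨ x.1 = -k.1) ∧ (x.2 = k.2 ∨ x.2 = -k.2)

theorem prodChar_mem_of_signOrbit_sum_mem (h2 : IsUnit (2 : ZMod d)) {i₁ i₂ j₁ j₂ : ZMod d}
    (hi : IsUnit (i₁ - i₂)) (hj : IsUnit (j₁ - j₂)) (k₀ : ZMod d × ZMod d)
    {W : Submodule ℂ (ZMod d × ZMod d → ℂ)}
    (hW : ∀ i ∈ ({i₁, i₂} : Set (ZMod d)), ∀ j ∈ ({j₁, j₂} : Set (ZMod d)),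
      ∑ k ∈ signOrbit d k₀, prodChar d k (-(i, j)) • ⇑(prodChar d k) ∈ W) :
    ⇑(prodChar d k₀) ∈ W := by
  have hneg {x y : ZMod d} (h : IsUnit (x - y)) : IsUnit (-x - -y) := by
    rw [neg_sub_neg, ← neg_sub]; exact h.neg
  obtain ⟨α₁, α₂, hα⟩ := stdAddChar.exists_combination_eq_ite_of_injective
    injective_stdAddChar h2 (hneg hi) k₀.1
  obtain ⟨β₁, β₂, hβ⟩ := stdAddChar.exists_combination_eq_ite_of_injective
    injective_stdAddChar h2 (hneg hj) k₀.2
  set u : ZMod d × ZMod d → ZMod d × ZMod d → ℂ := fun q =>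
    ∑ k ∈ signOrbit d k₀, prodChar d k (-q) • ⇑(prodChar d k)
  have hcomb : ⇑(prodChar d k₀) = (α₁ * β₁) • u (i₁, j₁) + (α₁ * β₂) • u (i₁, j₂) +
      (α₂ * β₁) • u (i₂, j₁) + (α₂ * β₂) • u (i₂, j₂) := by
    simp only [u, smul_sum, smul_smul, ← sum_add_distrib, ← add_smul]
    have hk₀ : k₀ ∈ signOrbit d k₀ := by simp [signOrbit]
    have hδ : ∑ k ∈ signOrbit d k₀, (if k₀ = k then ⇑(prodChar d k) else 0) =
        ⇑(prodChar d k₀) := by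
      rw [sum_ite_eq, if_pos hk₀]
    rw [← hδ]
    refine (sum_congr rfl fun k hk => ?_).symm
    obtain ⟨h₁, h₂⟩ := (mem_filter.1 hk).2
    calc _ = ((α₁ * stdAddChar (k.1 * -i₁) + α₂ * stdAddChar (k.1 * -i₂)) *
          (β₁ * stdAddChar (k.2 * -j₁) + β₂ * stdAddChar (k.2 * -j₂))) • ⇑(prodChar d k) := by
          simp only [prodChar_apply, Prod.fst_neg, Prod.snd_neg]
          congr 1
          ring
      _ = _ := by
          simp only [hα _ h₁, hβ _ h₂, ite_zero_mul_ite_zero, ← Prod.ext_iff, mul_one,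
            eq_comm (a := k₀)]
          split_ifs <;> simp
  rw [hcomb]
  exact add_mem (add_mem (add_mem (W.smul_mem _ (hW _ (by simp) _ (by simp)))
    (W.smul_mem _ (hW _ (by simp) _ (by simp)))) (W.smul_mem _ (hW _ (by simp) _ (by simp))))
    (W.smul_mem _ (hW _ (by simp) _ (by simp)))

theorem signOrbit_sum_mem_span_convMat2_pow (a : ZMod d × ZMod d → ℂ)
    (hsym : ∀ x y : ZMod d × ZMod d, hatKer2 d a x = hatKer2 d a y ↔
      ((y.1 = x.1 ∨ y.1 = -x.1) ∧ (y.2 = x.2 ∨ y.2 = -x.2)))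
    (k₀ q : ZMod d × ZMod d) {N : ℕ} (hN : #(univ.image (hatKer2 d a)) ≤ N) :
    ∑ k ∈ signOrbit d k₀, prodChar d k (-q) • ⇑(prodChar d k) ∈
      Submodule.span ℂ {w | ∃ n < N, w = convMat2 d a ^ n *ᵥ Pi.single q 1} := by
  classical
  have hlevel : univ.filter (hatKer2 d a · = hatKer2 d a k₀) = signOrbit d k₀ := by
    ext k
    simp only [signOrbit, mem_filter, mem_univ, true_and]
    rw [eq_comm, hsym]
  have h := Module.End.sum_filter_eigen_mem_span_pow (toLin' (convMat2 d a))
    (fun k => ⇑(prodChar d k)) (hatKer2 d a) (fun k => by rw [toLin'_apply, convMat2_mulVec_prodChar])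
    (fun k => ((d : ℂ) ^ 2)⁻¹ * prodChar d k (-q)) k₀ hN
  beta_reduce at h
  rw [← single_eq_sum_prodChar, hlevel] at h
  simp only [mul_smul, ← smul_sum, ← toLin'_pow, toLin'_apply] at h
  exact (Submodule.smul_mem_iff _ (by simp [NeZero.ne d])).1 h

end ZMod

/-- assume `d` odd and the kernel `a` possesses quadrantal symmetry in
frequency response, i.e. the level sets of `â` are exactly the orbits
`{(s,p),(s,-p),(-s,p),(-s,-p)}`. If `gcd(|i₁-i₂|,d) = 1` and `gcd(|j₁-j₂|,d) = 1`,
`Ω = {(i₁,j₁),(i₂,j₂),(i₁,j₂),(i₂,j₁)}` and `l_{(i,j)} = (d+1)²/4 - 1`, then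
`Y = {A^n e_{(i,j)} : (i,j) ∈ Ω, n ≤ (d+1)²/4 - 1}` is a frame. -/
theorem stmt17 (d : ℕ) [NeZero d] (hodd : Odd d) (a : ZMod d × ZMod d → ℂ)
    (hsym : ∀ x y : ZMod d × ZMod d, hatKer2 d a x = hatKer2 d a y ↔
      ((y.1 = x.1 ∨ y.1 = -x.1) ∧ (y.2 = x.2 ∨ y.2 = -x.2)))
    (i₁ i₂ j₁ j₂ : ZMod d)
    (hi : Nat.gcd (i₁ - i₂).val d = 1) (hj : Nat.gcd (j₁ - j₂).val d = 1) :
    Submodule.span ℂ {v : ZMod d × ZMod d → ℂ | ∃ q : ZMod d × ZMod d,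
        (q = (i₁, j₁) ∨ q = (i₂, j₂) ∨ q = (i₁, j₂) ∨ q = (i₂, j₁)) ∧
        ∃ n ≤ (d + 1) ^ 2 / 4 - 1,
        v = (convMat2 d a) ^ n *ᵥ (Pi.single q 1 : ZMod d × ZMod d → ℂ)} = ⊤ := by
  have hN : #(univ.image (hatKer2 d a)) ≤ (d + 1) ^ 2 / 4 := by
    rw [Nat.add_one_sq_div_four_of_odd hodd]
    exact ZMod.card_image_le_of_neg_invariant _ fun x y h₁ h₂ => (hsym x y).2 ⟨h₁, h₂⟩
  have hunit (x y : ZMod d) (h : Nat.gcd (x - y).val d = 1) : IsUnit (x - y) := by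
    rw [← ZMod.natCast_zmod_val (x - y)]
    exact (ZMod.isUnit_iff_coprime _ _).2 h
  have h2 : IsUnit (2 : ZMod d) := by
    rw [← Nat.cast_ofNat]
    exact (ZMod.isUnit_iff_coprime 2 d).2 (Nat.coprime_two_left.2 hodd)
  rw [eq_top_iff, ← ZMod.span_range_prodChar d, Submodule.span_le]
  rintro _ ⟨k₀, rfl⟩
  refine ZMod.prodChar_mem_of_signOrbit_sum_mem h2 (hunit _ _ hi) (hunit _ _ hj) k₀
    fun i hi' j hj' => Submodule.span_mono ?_
      (ZMod.signOrbit_sum_mem_span_convMat2_pow a hsym k₀ (i, j) hN)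
  rintro _ ⟨n, hn, rfl⟩
  refine ⟨(i, j), ?_, n, Nat.le_sub_one_of_lt hn, rfl⟩
  rcases hi' with rfl | rfl <;> rcases hj' with rfl | rfl <;> simp
end

section
/- Assume d is odd and let A be a circular convolution operator on ℓ²(ℤ_d×ℤ_d) with kernel a possessing octagonal symmetry in frequency response. Suppose i_1, i_2, j_1, j_2 ∈ ℤ_d satisfy gcd(|i_1−i_2|, d) = 1 and gcd(j_2, d) = 1, let Ω = {i_1,i_2} × {j_1, j_1+j_2, j_1+2j_2, j_1+3j_2}, and let l_{(i,j)} = (d+1)(d+3)/8 − 1 for each (i,j) ∈ Ω. Then Y = {e_{(i,j)}, A e_{(i,j)}, …, A^{(d+1)(d+3)/8 − 1} e_{(i,j)} : (i,j) ∈ Ω} is a frame for ℓ²(ℤ_d×ℤ_d). Alternatively, if i_1, i_2, j_1, j_2 ∈ ℤ_d satisfy gcd(|j_1−j_2|, d) = 1 and gcd(i_2, d) = 1, and Ω = {i_1, i_1+i_2, i_1+2i_2, i_1+3i_2} × {j_1,j_2} with the same l_{(i,j)}, then Y is a frame for ℓ²(ℤ_d×ℤ_d). -/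
open Matrix

/-!
With `e = ZMod.stdAddChar`, the plane waves `χ_m k = e(m·k)` diagonalise the convolution `A`,
with eigenvalues `â m`, and `d² e_q = ∑ₘ e(-m·q) χ_m`. Since `â` is constant on octagonal orbits
it takes at most `(d+1)(d+3)/8` values, so Lagrange interpolation in `A` recovers from the
`A^n e_q`, `n < (d+1)(d+3)/8`, the component `∑_{m ∈ L} e(-m·q) χ_m` of `e_q` on each level set
`L` of `â`. Moving `q` by `k j₂` in the second coordinate multiplies these coefficients by
`e(-m₂ j₂)^k`; on `L` the coordinate `m₂` takes at most four values, so interpolating once more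
over `k = 0, …, 3` isolates the points of `L` with a prescribed `m₂`, namely `(±m₁, m₂)`, and the
two first coordinates `i₁, i₂` separate these in the same way. Hence every plane wave, and
therefore every `e_q`, lies in the span.
-/

open Finset ZMod

theorem Submodule.sum_filter_mem_of_pow_smul_sum_mem {K M ι : Type*} [Field K] [AddCommGroup M]
    [Module K M] [DecidableEq K] (p : Submodule K M) {t : Finset ι} {φ : ι → K} {v : ι → M} {N : ℕ}
    (hN : (t.image φ).card ≤ N) (h : ∀ k < N, ∑ i ∈ t, φ i ^ k • v i ∈ p) (μ : K) :
    ∑ i ∈ t with φ i = μ, v i ∈ p := by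
  set s := t.image φ
  by_cases hμ : μ ∈ s
  swap
  · rw [sum_filter, sum_eq_zero fun i hi =>
      if_neg fun (he : φ i = μ) => hμ (he ▸ mem_image_of_mem φ hi)]
    exact p.zero_mem
  have hinj : Set.InjOn id (s : Set K) := Set.injOn_id _
  set P := Lagrange.basis s id μ
  have hdeg : P.natDegree < N := by
    have := card_pos.2 ⟨μ, hμ⟩
    rw [Lagrange.natDegree_basis hinj hμ]
    omega
  have hP (i) (hi : i ∈ t) : P.eval (φ i) = if φ i = μ then 1 else 0 := by
    split_ifs with hiμ
    · rw [hiμ]; exact Lagrange.eval_basis_self hinj hμ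
    · exact Lagrange.eval_basis_of_ne (v := id) (Ne.symm hiμ) (mem_image_of_mem φ hi)
  have key : ∑ k ∈ range N, P.coeff k • ∑ i ∈ t, φ i ^ k • v i = ∑ i ∈ t with φ i = μ, v i := by
    simp_rw [smul_sum, smul_smul]
    rw [sum_comm, sum_filter]
    refine sum_congr rfl fun i hi => ?_
    rw [← sum_smul, ← Polynomial.eval_eq_sum_range' hdeg, hP i hi, ite_smul, one_smul, zero_smul]
  exact key ▸ p.sum_mem fun k hk => p.smul_mem _ (h k (mem_range.1 hk))

theorem Matrix.pow_mulVec_eq_pow_smul {R ι : Type*} [CommSemiring R] [Fintype ι] [DecidableEq ι]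
    {M : Matrix ι ι R} {v : ι → R} {c : R} (h : M *ᵥ v = c • v) (n : ℕ) :
    (M ^ n) *ᵥ v = c ^ n • v := by
  induction n with
  | zero => simp
  | succ n ih =>
    rw [pow_succ', ← Matrix.mulVec_mulVec, ih, Matrix.mulVec_smul, h, smul_smul, pow_succ]

namespace OctagonalFrame

section

variable {R : Type*} [CommRing R]

def dot (m k : R × R) : R := m.1 * k.1 + m.2 * k.2

lemma dot_add_right (m k l : R × R) : dot m (k + l) = dot m k + dot m l := by
  simp only [dot, Prod.fst_add, Prod.snd_add]; ring

lemma dot_nsmul_right (m k : R × R) (n : ℕ) : dot m (n • k) = n • dot m k := by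
  simp only [dot, Prod.smul_fst, Prod.smul_snd, smul_add, mul_smul_comm]

lemma dot_sub_right (m k l : R × R) : dot m (k - l) = dot m k - dot m l := by
  simp only [dot, Prod.fst_sub, Prod.snd_sub]; ring

def InOctagonalOrbit (x y : R × R) : Prop :=
  ((y.1 = x.1 ∨ y.1 = -x.1) ∧ (y.2 = x.2 ∨ y.2 = -x.2)) ∨
    ((y.1 = x.2 ∨ y.1 = -x.2) ∧ (y.2 = x.1 ∨ y.2 = -x.1))

namespace InOctagonalOrbit

variable {x y : R × R}

lemma fst_eq (h : InOctagonalOrbit x y) : y.1 = x.1 ∨ y.1 = -x.1 ∨ y.1 = x.2 ∨ y.1 = -x.2 := by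
  unfold InOctagonalOrbit at h; tauto

lemma snd_eq (h : InOctagonalOrbit x y) : y.2 = x.1 ∨ y.2 = -x.1 ∨ y.2 = x.2 ∨ y.2 = -x.2 := by
  unfold InOctagonalOrbit at h; tauto

lemma fst_eq_of_snd_eq (h : InOctagonalOrbit x y) (h₂ : y.2 = x.2) : y.1 = x.1 ∨ y.1 = -x.1 := by
  rcases h with ⟨h₁, -⟩ | ⟨h₁, h₂'⟩
  · exact h₁
  · rcases h₁ with h₁ | h₁ <;> rcases h₂' with h₂' | h₂' <;> rw [h₁, ← h₂, h₂'] <;> simp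

lemma snd_eq_of_fst_eq (h : InOctagonalOrbit x y) (h₁ : y.1 = x.1) : y.2 = x.2 ∨ y.2 = -x.2 := by
  rcases h with ⟨-, h₂⟩ | ⟨h₁', h₂⟩
  · exact h₂
  · rcases h₁' with h₁' | h₁' <;> rcases h₂ with h₂ | h₂ <;> rw [h₂, ← h₁, h₁'] <;> simp

end InOctagonalOrbit

end

variable {d : ℕ} [NeZero d]

lemma natCast_natAbs_valMinAbs_eq_or (x : ZMod d) :
    (x.valMinAbs.natAbs : ZMod d) = x ∨ (x.valMinAbs.natAbs : ZMod d) = -x := by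
  rw [natCast_natAbs_valMinAbs]; split_ifs <;> simp

lemma card_image_le_of_octagonal {β : Type*} [DecidableEq β] (hodd : Odd d)
    {f : ZMod d × ZMod d → β} (hf : ∀ x y, InOctagonalOrbit x y → f x = f y) :
    (univ.image f).card ≤ (d + 1) * (d + 3) / 8 := by
  -- Each orbit contains a point `(u, v)` with `u, v ≤ d / 2` (as naturals), and `(v, u)` lies in
  -- the same orbit: the values of `f` are indexed by unordered pairs from `range (d / 2 + 1)`.
  let g : Sym2 ℕ → β := Sym2.lift ⟨fun u v => f (u, v), fun u v =>
    hf _ _ (Or.inr ⟨Or.inl rfl, Or.inl rfl⟩)⟩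
  have hsub : univ.image f ⊆ ((range (d / 2 + 1)).sym2).image g := by
    simp only [subset_iff, mem_image, mem_univ, true_and, forall_exists_index,
      forall_apply_eq_imp_iff]
    intro x
    refine ⟨s(x.1.valMinAbs.natAbs, x.2.valMinAbs.natAbs), ?_, ?_⟩
    · simp only [mk_mem_sym2_iff, mem_range, Nat.lt_succ_iff, natAbs_valMinAbs_le, and_self]
    · exact (hf x _ (Or.inl
        ⟨natCast_natAbs_valMinAbs_eq_or _, natCast_natAbs_valMinAbs_eq_or _⟩)).symm
  refine (card_le_card hsub).trans (card_image_le.trans ?_)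
  obtain ⟨h, rfl⟩ := hodd
  rw [card_sym2, card_range, show (2 * h + 1) / 2 = h by omega, Nat.choose_two_right,
    show (2 * h + 1 + 1) * (2 * h + 1 + 3) = 4 * ((h + 1 + 1) * (h + 1 + 1 - 1)) by
      simp only [Nat.add_sub_cancel]; ring,
    show 8 = 4 * 2 from rfl, Nat.mul_div_mul_left _ _ four_pos]

noncomputable def planeWave (m : ZMod d × ZMod d) : ZMod d × ZMod d → ℂ :=
  fun k => stdAddChar (dot m k)

lemma hatKer2_eq_sum (a : ZMod d × ZMod d → ℂ) (m : ZMod d × ZMod d) :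
    hatKer2 d a m = ∑ k, a k * stdAddChar (-dot m k) := by
  refine sum_congr rfl fun k _ => congrArg (a k * ·) ?_
  have hdot : -dot m k = ((-(m.1.val * k.1.val + m.2.val * k.2.val : ℕ) : ℤ) : ZMod d) := by
    push_cast [natCast_zmod_val]; rfl
  rw [hdot, stdAddChar_coe]
  push_cast
  ring_nf

lemma convMat2_mulVec_planeWave (a : ZMod d × ZMod d → ℂ) (m : ZMod d × ZMod d) :
    convMat2 d a *ᵥ planeWave m = hatKer2 d a m • planeWave m := by
  ext k
  rw [hatKer2_eq_sum, Pi.smul_apply, smul_eq_mul, sum_mul]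
  refine Fintype.sum_equiv (Equiv.subLeft k) _ _ fun i => ?_
  simp only [convMat2, planeWave, Matrix.of_apply, Equiv.subLeft_apply,
    mul_assoc, ← AddChar.map_add_eq_mul, dot_sub_right, neg_add_eq_sub, sub_sub_cancel]

lemma sum_stdAddChar_dot (t : ZMod d × ZMod d) :
    ∑ m, stdAddChar (dot m t) = if t = 0 then (d : ℂ) ^ 2 else 0 := by
  have hprim := isPrimitive_stdAddChar d
  simp only [dot, AddChar.map_add_eq_mul, Fintype.sum_prod_type, ← sum_mul_sum,
    AddChar.sum_mulShift _ hprim, ZMod.card, Prod.ext_iff, Prod.fst_zero, Prod.snd_zero]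
  split_ifs <;> simp_all [sq]

lemma sum_smul_planeWave (q : ZMod d × ZMod d) :
    ∑ m, stdAddChar (-dot m q) • planeWave m = (d : ℂ) ^ 2 • Pi.single q 1 := by
  ext k
  simp only [Finset.sum_apply, Pi.smul_apply, smul_eq_mul, planeWave, ← AddChar.map_add_eq_mul,
    neg_add_eq_sub, ← dot_sub_right, sum_stdAddChar_dot, sub_eq_zero, Pi.single_apply,
    mul_ite, mul_one, mul_zero]

lemma smul_pow_mulVec_single (a : ZMod d × ZMod d → ℂ) (q : ZMod d × ZMod d) (n : ℕ) :
    (d : ℂ) ^ 2 • (convMat2 d a ^ n *ᵥ Pi.single q 1)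
      = ∑ m, hatKer2 d a m ^ n • stdAddChar (-dot m q) • planeWave m := by
  rw [← Matrix.mulVec_smul, ← sum_smul_planeWave, Matrix.mulVec_sum]
  refine sum_congr rfl fun m _ => ?_
  rw [Matrix.mulVec_smul, Matrix.pow_mulVec_eq_pow_smul (convMat2_mulVec_planeWave a m),
    smul_comm]

noncomputable def fourierSum (S : Finset (ZMod d × ZMod d)) (q : ZMod d × ZMod d) :
    ZMod d × ZMod d → ℂ :=
  ∑ m ∈ S, stdAddChar (-dot m q) • planeWave m

lemma fourierSum_levelSet_mem {p : Submodule ℂ (ZMod d × ZMod d → ℂ)}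
    (a : ZMod d × ZMod d → ℂ) {N : ℕ} (hN : (univ.image (hatKer2 d a)).card ≤ N)
    {q : ZMod d × ZMod d} (h : ∀ n < N, convMat2 d a ^ n *ᵥ Pi.single q 1 ∈ p)
    (m₀ : ZMod d × ZMod d) : fourierSum {m | hatKer2 d a m = hatKer2 d a m₀} q ∈ p :=
  p.sum_filter_mem_of_pow_smul_sum_mem hN
    (fun n hn => smul_pow_mulVec_single a q n ▸ p.smul_mem _ (h n hn)) _

lemma stdAddChar_neg_dot_add_nsmul (m q r : ZMod d × ZMod d) (k : ℕ) :
    stdAddChar (-dot m (q + k • r)) = stdAddChar (-dot m r) ^ k * stdAddChar (-dot m q) := by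
  rw [dot_add_right, dot_nsmul_right, neg_add, ← smul_neg, AddChar.map_add_eq_mul,
    AddChar.map_nsmul_eq_pow, mul_comm]

lemma fourierSum_filter_mem {p : Submodule ℂ (ZMod d × ZMod d → ℂ)}
    {S : Finset (ZMod d × ZMod d)} {q r : ZMod d × ZMod d} {N : ℕ}
    (hN : (S.image (dot · r)).card ≤ N) (h : ∀ k < N, fourierSum S (q + k • r) ∈ p)
    (m₀ : ZMod d × ZMod d) : fourierSum {m ∈ S | dot m r = dot m₀ r} q ∈ p := by
  have hcard : (S.image fun m => stdAddChar (-dot m r)).card ≤ N :=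
    calc (S.image fun m => stdAddChar (-dot m r)).card
        = ((S.image (dot · r)).image fun x => stdAddChar (-x)).card := by rw [image_image]; rfl
      _ ≤ N := card_image_le.trans hN
  have hsep := p.sum_filter_mem_of_pow_smul_sum_mem hcard
    (v := fun m => stdAddChar (-dot m q) • planeWave m)
    (fun k hk => by simpa only [fourierSum, smul_smul, ← stdAddChar_neg_dot_add_nsmul] using h k hk)
    (stdAddChar (-dot m₀ r))
  rwa [filter_congr fun m _ => by rw [injective_stdAddChar.eq_iff, neg_inj]] at hsep

-- Probing along `r`, then along `s`, cuts `m₀` out of `S` through at most `4` and then `2`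
-- values: the side lengths of the grid of sampling points.
def Isolates (r s : ZMod d × ZMod d) (S : Finset (ZMod d × ZMod d)) (m₀ : ZMod d × ZMod d) :
    Prop :=
  (S.image (dot · r)).card ≤ 4 ∧ ({m ∈ S | dot m r = dot m₀ r}.image (dot · s)).card ≤ 2 ∧
    {m ∈ S | dot m r = dot m₀ r ∧ dot m s = dot m₀ s} = {m₀}

lemma planeWave_mem_of_isolates {p : Submodule ℂ (ZMod d × ZMod d → ℂ)}
    {S : Finset (ZMod d × ZMod d)} {q r s m₀ : ZMod d × ZMod d} (hiso : Isolates r s S m₀)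
    (h : ∀ k < 4, ∀ l < 2, fourierSum S (q + l • s + k • r) ∈ p) : planeWave m₀ ∈ p := by
  obtain ⟨hr, hs, hrs⟩ := hiso
  have hm₀ := fourierSum_filter_mem hs
    (fun l hl => fourierSum_filter_mem hr (fun k hk => h k hk l hl) m₀) m₀
  rw [filter_filter, hrs, fourierSum, sum_singleton, stdAddChar_apply] at hm₀
  exact (p.smul_mem_iff (Circle.coe_ne_zero _)).1 hm₀

lemma eq_top_of_forall_planeWave_mem {p : Submodule ℂ (ZMod d × ZMod d → ℂ)}
    (h : ∀ m, planeWave m ∈ p) : p = ⊤ := by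
  have hsingle (q : ZMod d × ZMod d) : Pi.single q 1 ∈ p := by
    have hsum := p.sum_mem (t := univ) fun m _ => p.smul_mem (stdAddChar (-dot m q)) (h m)
    rwa [sum_smul_planeWave, p.smul_mem_iff (pow_ne_zero 2 (Nat.cast_ne_zero.2 (NeZero.ne d)))]
      at hsum
  rw [eq_top_iff, ← (Pi.basisFun ℂ _).span_eq, Submodule.span_le]
  rintro _ ⟨q, rfl⟩
  exact Pi.basisFun_apply ℂ _ q ▸ hsingle q

theorem eq_top_of_isolates {p : Submodule ℂ (ZMod d × ZMod d → ℂ)} (a : ZMod d × ZMod d → ℂ)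
    {N : ℕ} (hN : (univ.image (hatKer2 d a)).card ≤ N) {q r s : ZMod d × ZMod d}
    (hiso : ∀ m₀, Isolates r s {m | hatKer2 d a m = hatKer2 d a m₀} m₀)
    (h : ∀ k < 4, ∀ l < 2, ∀ n < N, convMat2 d a ^ n *ᵥ Pi.single (q + l • s + k • r) 1 ∈ p) :
    p = ⊤ :=
  eq_top_of_forall_planeWave_mem fun m₀ => planeWave_mem_of_isolates (hiso m₀)
    fun k hk l hl => fourierSum_levelSet_mem a hN (h k hk l hl) m₀

lemma isolates_snd_fst {f : ZMod d × ZMod d → ℂ}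
    (hf : ∀ x y, f x = f y → InOctagonalOrbit x y) {u t : ZMod d} (hu : IsUnit u)
    (ht : IsUnit t) (m₀ : ZMod d × ZMod d) : Isolates (0, u) (t, 0) {m | f m = f m₀} m₀ := by
  simp only [Isolates, dot, mul_zero, zero_add, add_zero, hu.mul_left_inj, ht.mul_left_inj]
  refine ⟨?_, ?_, ?_⟩
  · refine (card_le_card (t := ({m₀.1, -m₀.1, m₀.2, -m₀.2} : Finset _).image (· * u)) ?_).trans
      (card_image_le.trans card_le_four)
    simp only [subset_iff, mem_image, mem_filter, mem_univ, true_and, forall_exists_index, and_imp]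
    rintro _ m hm rfl
    exact ⟨m.2, by simpa using (hf m₀ m hm.symm).snd_eq, rfl⟩
  · refine (card_le_card (t := ({m₀.1, -m₀.1} : Finset _).image (· * t)) ?_).trans
      (card_image_le.trans card_le_two)
    simp only [subset_iff, mem_image, mem_filter, mem_univ, true_and, forall_exists_index, and_imp]
    rintro _ m hm h₂ rfl
    exact ⟨m.1, by simpa using (hf m₀ m hm.symm).fst_eq_of_snd_eq h₂, rfl⟩
  · ext m
    simp only [mem_filter, mem_univ, true_and, mem_singleton]
    constructor
    · rintro ⟨hm, h₂, h₁⟩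
      exact Prod.ext h₁ h₂
    · rintro rfl
      exact ⟨rfl, rfl, rfl⟩

lemma isolates_fst_snd {f : ZMod d × ZMod d → ℂ}
    (hf : ∀ x y, f x = f y → InOctagonalOrbit x y) {u t : ZMod d} (hu : IsUnit u)
    (ht : IsUnit t) (m₀ : ZMod d × ZMod d) : Isolates (u, 0) (0, t) {m | f m = f m₀} m₀ := by
  simp only [Isolates, dot, mul_zero, zero_add, add_zero, hu.mul_left_inj, ht.mul_left_inj]
  refine ⟨?_, ?_, ?_⟩
  · refine (card_le_card (t := ({m₀.1, -m₀.1, m₀.2, -m₀.2} : Finset _).image (· * u)) ?_).trans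
      (card_image_le.trans card_le_four)
    simp only [subset_iff, mem_image, mem_filter, mem_univ, true_and, forall_exists_index, and_imp]
    rintro _ m hm rfl
    exact ⟨m.1, by simpa using (hf m₀ m hm.symm).fst_eq, rfl⟩
  · refine (card_le_card (t := ({m₀.2, -m₀.2} : Finset _).image (· * t)) ?_).trans
      (card_image_le.trans card_le_two)
    simp only [subset_iff, mem_image, mem_filter, mem_univ, true_and, forall_exists_index, and_imp]
    rintro _ m hm h₁ rfl
    exact ⟨m.2, by simpa using (hf m₀ m hm.symm).snd_eq_of_fst_eq h₁, rfl⟩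
  · ext m
    simp only [mem_filter, mem_univ, true_and, mem_singleton]
    constructor
    · rintro ⟨hm, h₁, h₂⟩
      exact Prod.ext h₁ h₂
    · rintro rfl
      exact ⟨rfl, rfl, rfl⟩

lemma isUnit_of_gcd_val_eq_one {x : ZMod d} (h : Nat.gcd x.val d = 1) : IsUnit x :=
  natCast_zmod_val x ▸ (isUnit_iff_coprime x.val d).2 h

end OctagonalFrame

open OctagonalFrame

/-- assume `d` odd and the kernel `a` possesses octagonal symmetry in
frequency response, i.e. the level sets of `â` are exactly the orbits
`{(s,p),(p,s),(-p,s),(-s,p),(-s,-p),(-p,-s),(p,-s),(s,-p)}`. Then, with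
`l_{(i,j)} = (d+1)(d+3)/8 - 1`: (first part) if `gcd(|i₁-i₂|,d) = 1` and
`gcd(j₂,d) = 1`, then for `Ω = {i₁,i₂} × {j₁, j₁+j₂, j₁+2j₂, j₁+3j₂}` the family
`Y = {A^n e_{(i,j)} : (i,j) ∈ Ω, n ≤ (d+1)(d+3)/8 - 1}` is a frame; (second part) if
`gcd(|j₁-j₂|,d) = 1` and `gcd(i₂,d) = 1`, then the same holds for
`Ω = {i₁, i₁+i₂, i₁+2i₂, i₁+3i₂} × {j₁,j₂}`. -/
theorem stmt19 (d : ℕ) [NeZero d] (hodd : Odd d) (a : ZMod d × ZMod d → ℂ)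
    (hsym : ∀ x y : ZMod d × ZMod d, hatKer2 d a x = hatKer2 d a y ↔
      (((y.1 = x.1 ∨ y.1 = -x.1) ∧ (y.2 = x.2 ∨ y.2 = -x.2)) ∨
       ((y.1 = x.2 ∨ y.1 = -x.2) ∧ (y.2 = x.1 ∨ y.2 = -x.1))))
    (i₁ i₂ j₁ j₂ : ZMod d) :
    ((Nat.gcd (i₁ - i₂).val d = 1 → Nat.gcd j₂.val d = 1 →
      Submodule.span ℂ {v : ZMod d × ZMod d → ℂ | ∃ q : ZMod d × ZMod d,
        ((q.1 = i₁ ∨ q.1 = i₂) ∧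
          (q.2 = j₁ ∨ q.2 = j₁ + j₂ ∨ q.2 = j₁ + 2 * j₂ ∨ q.2 = j₁ + 3 * j₂)) ∧
        ∃ n ≤ (d + 1) * (d + 3) / 8 - 1,
        v = (convMat2 d a) ^ n *ᵥ (Pi.single q 1 : ZMod d × ZMod d → ℂ)} = ⊤) ∧
     (Nat.gcd (j₁ - j₂).val d = 1 → Nat.gcd i₂.val d = 1 →
      Submodule.span ℂ {v : ZMod d × ZMod d → ℂ | ∃ q : ZMod d × ZMod d,
        ((q.1 = i₁ ∨ q.1 = i₁ + i₂ ∨ q.1 = i₁ + 2 * i₂ ∨ q.1 = i₁ + 3 * i₂) ∧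
          (q.2 = j₁ ∨ q.2 = j₂)) ∧
        ∃ n ≤ (d + 1) * (d + 3) / 8 - 1,
        v = (convMat2 d a) ^ n *ᵥ (Pi.single q 1 : ZMod d × ZMod d → ℂ)} = ⊤)) := by
  have hN := card_image_le_of_octagonal hodd fun x y => (hsym x y).2
  have hf x y := (hsym x y).1
  refine ⟨fun hi hj => ?_, fun hj hi => ?_⟩
  · refine eq_top_of_isolates a hN (q := (i₂, j₁)) (r := (0, j₂)) (s := (i₁ - i₂, 0))
      (isolates_snd_fst hf (isUnit_of_gcd_val_eq_one hj) (isUnit_of_gcd_val_eq_one hi))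
      fun k hk l hl n hn => Submodule.subset_span ⟨_, ?_, n, by omega, rfl⟩
    interval_cases k <;> interval_cases l <;> simp
  · refine eq_top_of_isolates a hN (q := (i₁, j₂)) (r := (i₂, 0)) (s := (0, j₁ - j₂))
      (isolates_fst_snd hf (isUnit_of_gcd_val_eq_one hi) (isUnit_of_gcd_val_eq_one hj))
      fun k hk l hl n hn => Submodule.subset_span ⟨_, ?_, n, by omega, rfl⟩
    interval_cases k <;> interval_cases l <;> simp
end
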